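/- arXiv:2602.11975 — 5 statements merged into one kernel-verified Lean document; each statement's English description precedes it below -/
import Mathlib

section
/- Let G and H be multigraphs such that H is a subgraph of G (i.e., V(H) ⊆ V(G), E(H) ⊆ E(G), and every common edge has identical end-vertices in H and G), and let n ≥ 1. Then T_{H,n} is a simple projection of T_{G,n}: T_{H,n} ≤_s T_{G,n}. -/
open Classical Finset MvPolynomial

/-- A multigraph on the ambient vertex type `V`: a finite edge type together with an
assignment of an unordered pair of distinct end-vertices to every edge.
Parallel edges are allowed. -/
structure Multigraph (V : Type) where
  E : Type
  [decE : DecidableEq E]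
  [fintE : Fintype E]
  ends : E → Sym2 V
  loopless : ∀ e, ¬ (ends e).IsDiag

attribute [instance] Multigraph.decE Multigraph.fintE

namespace Multigraph

/-- The set (type) of edges incident with the vertex `v`. -/
def Inc {V : Type} (G : Multigraph V) (v : V) : Type := {e : G.E // v ∈ G.ends e}

noncomputable instance {V : Type} (G : Multigraph V) (v : V) : Fintype (G.Inc v) :=
  Fintype.ofInjective (fun e : G.Inc v => e.1) Subtype.val_injective

noncomputable instance {V : Type} (G : Multigraph V) (v : V) : DecidableEq (G.Inc v) :=
  Classical.decEq _

end Multigraph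

/-- The graph tensor `T_{G,n}`, represented by its array of coefficients:
it is the set-multilinear polynomial with one mode per vertex `v`, whose mode-`v`
variables are indexed by the functions `g : I_G(v) → Fin n`, and which equals
`∑_{f : E(G) → Fin n} ∏_{v} x^{(v)}_{f | I_G(v)}`.  Hence the coefficient of the
set-multilinear monomial `∏_v x^{(v)}_{a v}` is the number of `f : E(G) → Fin n`
whose restriction to `I_G(v)` equals `a v` for every `v`. -/
noncomputable def gTensor (F : Type) [Field F] {V : Type} (G : Multigraph V) (n : ℕ) :
    (∀ v : V, G.Inc v → Fin n) → F :=
  fun a => ∑ f : G.E → Fin n,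
    if ∀ (v : V) (e : G.Inc v), a v e = f e.1 then 1 else 0

/-- Two tensors (given by their coefficient arrays, with modes indexed by `ι` resp. `κ`
and with mode variable sets `X i` resp. `Y j`) are equivalent if one is obtained from the
other by a bijective renaming of variables that is bijective on modes. -/
def TEquiv {F : Type} [Field F] {ι κ : Type} {X : ι → Type} {Y : κ → Type}
    (S : (∀ i, X i) → F) (T : (∀ j, Y j) → F) : Prop :=
  ∃ (σ : ι ≃ κ) (e : ∀ i, X i ≃ Y (σ i)),
    ∀ b : ∀ j, Y j, T b = S fun i => (e i).symm (b (σ i))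

/-- The Kronecker product of two tensors with the same mode index type `ι`:
the `i`-th mode of `S ⊗ T` has variable set `X i × Y i`, and the coefficients multiply. -/
def kron {F : Type} [Field F] {ι : Type} {X Y : ι → Type}
    (S : (∀ i, X i) → F) (T : (∀ i, Y i) → F) : (∀ i, X i × Y i) → F :=
  fun c => S (fun i => (c i).1) * T (fun i => (c i).2)

/-- The `k`-th Kronecker power of a `d`-mode tensor with `n` variables per mode. -/
def kronPow {F : Type} [Field F] {d n : ℕ} (T : (Fin d → Fin n) → F) (k : ℕ) :
    (Fin d → (Fin k → Fin n)) → F :=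
  fun a => ∏ s : Fin k, T fun i => a i s

/-- The rank of a tensor: the least `r` such that `T` is the sum of `r` products of
linear forms, one linear form per mode (a linear form on mode `i` is recorded by its
coefficient vector `X i → F`). -/
noncomputable def tensorRank {F : Type} [Field F] {ι : Type} [Fintype ι] {X : ι → Type}
    (T : (∀ i, X i) → F) : ℕ :=
  sInf {r : ℕ | ∃ ℓ : Fin r → (∀ i, X i → F),
    ∀ a : ∀ i, X i, T a = ∑ s : Fin r, ∏ i, ℓ s i (a i)}

/-- `S` is a restriction of `T` (written `S ≤ T`): there is a bijection `σ` between the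
modes of `T` and the modes of `S` such that `S` is obtained from `T` by substituting for
each variable of mode `j` of `T` a linear form (recorded by its coefficient vector `M j y`)
in the variables of mode `σ j` of `S`. -/
def Restrict {F : Type} [Field F] {ι κ : Type} [Fintype κ] [DecidableEq κ]
    {X : ι → Type} {Y : κ → Type} [∀ j, Fintype (Y j)]
    (S : (∀ i, X i) → F) (T : (∀ j, Y j) → F) : Prop :=
  ∃ (σ : κ ≃ ι) (M : ∀ j, Y j → X (σ j) → F),
    ∀ a : ∀ i, X i, S a = ∑ b : ∀ j, Y j, T b * ∏ j, M j (b j) (a (σ j))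

/-- The tensor, viewed as an honest (set-multilinear) polynomial in the variables
`Σ i, X i`. -/
noncomputable def toPoly {F : Type} [Field F] {ι : Type} [Fintype ι] [DecidableEq ι]
    {X : ι → Type} [∀ i, Fintype (X i)] (T : (∀ i, X i) → F) :
    MvPolynomial (Σ i, X i) F :=
  ∑ a : ∀ i, X i, MvPolynomial.C (T a) * ∏ i, MvPolynomial.X (⟨i, a i⟩ : Σ i, X i)

/-- `S` is a simple projection of `T` (written `S ≤ₛ T`): `S` is obtained from `T` by a
substitution assigning to each variable of `T` either a scalar or a variable of `S`, in
such a way that the image of the variable set of each mode of `T` meets the variable set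
of at most one mode of `S`. -/
def SimpleProj {F : Type} [Field F] {ι κ : Type} [Fintype ι] [DecidableEq ι]
    [Fintype κ] [DecidableEq κ] {X : ι → Type} {Y : κ → Type}
    [∀ i, Fintype (X i)] [∀ j, Fintype (Y j)]
    (S : (∀ i, X i) → F) (T : (∀ j, Y j) → F) : Prop :=
  ∃ s : (Σ j, Y j) → F ⊕ (Σ i, X i),
    (∀ (j : κ) (y y' : Y j) (p p' : Σ i, X i),
        s ⟨j, y⟩ = Sum.inr p → s ⟨j, y'⟩ = Sum.inr p' → p.1 = p'.1) ∧
    toPoly S = MvPolynomial.aeval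
      (fun q => Sum.elim (fun c => (MvPolynomial.C c : MvPolynomial (Σ i, X i) F))
        (fun p => MvPolynomial.X p) (s q)) (toPoly T)

/-- `H` embeds into `G`, i.e. `H` is isomorphic to a subgraph of `G`: there are injections
on vertices and on edges preserving the end-vertex assignment. -/
def EmbedsIn {V W : Type} (H : Multigraph V) (G : Multigraph W) : Prop :=
  ∃ (φ : V → W) (ψ : H.E → G.E), Function.Injective φ ∧ Function.Injective ψ ∧
    ∀ e, G.ends (ψ e) = (H.ends e).map φ

section Aux

lemma toPoly_gTensor (F : Type) [Field F] {W : Type} [Fintype W] [DecidableEq W]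
    (G : Multigraph W) (n : ℕ) :
    toPoly (gTensor F G n) = ∑ f : G.E → Fin n,
      ∏ w, (MvPolynomial.X ⟨w, fun e => f e.1⟩ :
        MvPolynomial ((Σ w : W, (G.Inc w → Fin n))) F) := by
  unfold toPoly gTensor
  simp only [map_sum, Finset.sum_mul]
  rw [Finset.sum_comm]
  refine Finset.sum_congr rfl fun f _ => ?_
  rw [Finset.sum_eq_single (fun (v : W) (e : G.Inc v) => f e.1)]
  · simp
  · intro a _ ha
    rw [if_neg, map_zero, zero_mul]
    exact fun hc => ha (funext fun v => funext fun e => hc v e)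
  · simp

noncomputable def subMap (F : Type) [Field F] {V W : Type} (H : Multigraph V)
    (G : Multigraph W) (n : ℕ) (z : Fin n) (φ : V → W) (ψ : H.E → G.E) :
    (Σ w : W, (G.Inc w → Fin n)) → F ⊕ (Σ v : V, (H.Inc v → Fin n)) := fun q =>
  if hw : ∃ v, φ v = q.1 then
    if ∀ d : G.Inc q.1, (¬ ∃ e₀ : H.E, ψ e₀ = d.1) → q.2 d = z then
      Sum.inr ⟨hw.choose,
        fun e => if h : q.1 ∈ G.ends (ψ e.1) then q.2 ⟨ψ e.1, h⟩ else z⟩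
    else Sum.inl 0
  else Sum.inl (if ∀ d : G.Inc q.1, q.2 d = z then 1 else 0)

variable {F : Type} [Field F] {V W : Type} {H : Multigraph V} {G : Multigraph W} {n : ℕ}
  {z : Fin n} {φ : V → W} {ψ : H.E → G.E}

lemma subMap_not_range {w : W} (hw : ¬ ∃ v, φ v = w) (g : G.Inc w → Fin n) :
    subMap F H G n z φ ψ ⟨w, g⟩ =
      Sum.inl (if ∀ d : G.Inc w, g d = z then 1 else 0) := by
  simp only [subMap]
  rw [dif_neg hw]

lemma subMap_bad {w : W} (hw : ∃ v, φ v = w) (g : G.Inc w → Fin n)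
    (hg : ¬ ∀ d : G.Inc w, (¬ ∃ e₀ : H.E, ψ e₀ = d.1) → g d = z) :
    subMap F H G n z φ ψ ⟨w, g⟩ = Sum.inl 0 := by
  simp only [subMap]
  rw [dif_pos hw, if_neg hg]

lemma subMap_good (hφ : Function.Injective φ)
    (hmem : ∀ (v : V) (e : H.Inc v), φ v ∈ G.ends (ψ e.1))
    (v : V) (g : G.Inc (φ v) → Fin n)
    (hg : ∀ d : G.Inc (φ v), (¬ ∃ e₀ : H.E, ψ e₀ = d.1) → g d = z) :
    subMap F H G n z φ ψ ⟨φ v, g⟩ =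
      Sum.inr ⟨v, fun e => g ⟨ψ e.1, hmem v e⟩⟩ := by
  have hw : ∃ u, φ u = φ v := ⟨v, rfl⟩
  simp only [subMap]
  rw [dif_pos hw, if_pos hg]
  have hc : hw.choose = v := hφ hw.choose_spec
  have step1 : (⟨hw.choose,
        fun e => if h : φ v ∈ G.ends (ψ e.1) then g ⟨ψ e.1, h⟩ else z⟩ :
        Σ x : V, (H.Inc x → Fin n)) =
      ⟨v, fun e => if h : φ v ∈ G.ends (ψ e.1) then g ⟨ψ e.1, h⟩ else z⟩ :=
    congrArg (fun x : V =>
      (⟨x, fun e => if h : φ v ∈ G.ends (ψ e.1) then g ⟨ψ e.1, h⟩ else z⟩ :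
        Σ x : V, (H.Inc x → Fin n))) hc
  rw [step1]
  exact congrArg (fun k => (Sum.inr ⟨v, k⟩ : F ⊕ (Σ x : V, (H.Inc x → Fin n))))
    (funext fun e => dif_pos (hmem v e))

end Aux

/-- If `H` is a subgraph of `G` (formally: `H` embeds into `G` by
injections on vertices and edges preserving end-vertices) and `n ≥ 1`, then `T_{H,n}` is a
simple projection of `T_{G,n}`: `T_{H,n} ≤ₛ T_{G,n}`. -/
theorem gTensor_simpleProj_of_subgraph (F : Type) [Field F] {V W : Type}
    [Fintype V] [DecidableEq V] [Fintype W] [DecidableEq W]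
    (H : Multigraph V) (G : Multigraph W) (hHG : EmbedsIn H G) (n : ℕ) (hn : 1 ≤ n) :
    SimpleProj (gTensor F H n) (gTensor F G n) := by
  classical
  obtain ⟨φ, ψ, hφ, hψ, hends⟩ := hHG
  have hmem : ∀ (v : V) (e : H.Inc v), φ v ∈ G.ends (ψ e.1) := by
    intro v e
    rw [hends]
    exact Sym2.mem_map.2 ⟨v, e.2, rfl⟩
  set z : Fin n := ⟨0, hn⟩ with hz
  refine ⟨subMap F H G n z φ ψ, ?_, ?_⟩
  · intro j y y' p p' h h'
    by_cases hw : ∃ v, φ v = j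
    · by_cases h1 : ∀ d : G.Inc j, (¬ ∃ e₀ : H.E, ψ e₀ = d.1) → y d = z
      · by_cases h2 : ∀ d : G.Inc j, (¬ ∃ e₀ : H.E, ψ e₀ = d.1) → y' d = z
        · simp only [subMap, dif_pos hw, if_pos h1, if_pos h2] at h h'
          obtain rfl := Sum.inr_injective h
          obtain rfl := Sum.inr_injective h'
          rfl
        · simp only [subMap, dif_pos hw, if_pos h1, if_neg h2] at h h'
          exact absurd h' (by simp)
      · simp only [subMap, dif_pos hw, if_neg h1] at h
        exact absurd h (by simp)
    · simp only [subMap, dif_neg hw] at h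
      exact absurd h (by simp)
  · rw [toPoly_gTensor, toPoly_gTensor, map_sum]
    simp only [map_prod, aeval_X]
    set emap : (H.E → Fin n) → (G.E → Fin n) :=
      fun f e => if h : ∃ e₀, ψ e₀ = e then f h.choose else z with hemap
    have emap_app : ∀ (f : H.E → Fin n) (e₀ : H.E), emap f (ψ e₀) = f e₀ := by
      intro f e₀
      have h : ∃ e₁, ψ e₁ = ψ e₀ := ⟨e₀, rfl⟩
      simp only [hemap, dif_pos h]
      exact congrArg f (hψ h.choose_spec)
    have emap_out : ∀ (f : H.E → Fin n) (e : G.E), (¬ ∃ e₀, ψ e₀ = e) → emap f e = z := by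
      intro f e h
      simp only [hemap, dif_neg h]
    have emap_inj : ∀ a ∈ (Finset.univ : Finset (H.E → Fin n)), ∀ b ∈ Finset.univ,
        emap a = emap b → a = b := by
      intro a _ b _ h
      funext e₀
      rw [← emap_app a e₀, ← emap_app b e₀, h]
    have hvan : ∀ f : G.E → Fin n, f ∉ Finset.univ.image emap →
        (∏ w, Sum.elim (fun c => (MvPolynomial.C c : MvPolynomial (Σ v : V, (H.Inc v → Fin n)) F))
          (fun p => MvPolynomial.X p) (subMap F H G n z φ ψ ⟨w, fun e => f e.1⟩)) = 0 := by
      intro f hf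
      have hex : ∃ e : G.E, (¬ ∃ e₀, ψ e₀ = e) ∧ f e ≠ z := by
        by_contra hcon
        push_neg at hcon
        apply hf
        refine Finset.mem_image.2 ⟨fun e₀ => f (ψ e₀), Finset.mem_univ _, ?_⟩
        funext e
        by_cases h : ∃ e₀, ψ e₀ = e
        · have : emap (fun e₀ => f (ψ e₀)) e = f (ψ h.choose) := by
            simp only [hemap, dif_pos h]
          rw [this, h.choose_spec]
        · exact (emap_out (fun e₀ => f (ψ e₀)) e h).trans (hcon e (fun e₀ heq => h ⟨e₀, heq⟩)).symm
      obtain ⟨e, he, hfe⟩ := hex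
      have hwmem : (G.ends e).out.1 ∈ G.ends e := Sym2.out_fst_mem _
      apply Finset.prod_eq_zero (Finset.mem_univ (G.ends e).out.1)
      by_cases hw : ∃ v, φ v = (G.ends e).out.1
      · rw [subMap_bad hw]
        · simp
        · intro hall
          exact hfe (hall ⟨e, hwmem⟩ he)
      · rw [subMap_not_range hw, if_neg]
        · simp
        · intro hall
          exact hfe (hall ⟨e, hwmem⟩)
    have key : ∀ f' : H.E → Fin n,
        (∏ w, Sum.elim (fun c => (MvPolynomial.C c : MvPolynomial (Σ v : V, (H.Inc v → Fin n)) F))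
          (fun p => MvPolynomial.X p) (subMap F H G n z φ ψ ⟨w, fun e => emap f' e.1⟩)) =
        ∏ v, MvPolynomial.X ⟨v, fun e => f' e.1⟩ := by
      intro f'
      rw [← Finset.prod_mul_prod_compl (Finset.univ.image φ)]
      have h2 : ∀ w ∈ (Finset.univ.image φ)ᶜ,
          Sum.elim (fun c => (MvPolynomial.C c : MvPolynomial (Σ v : V, (H.Inc v → Fin n)) F))
            (fun p => MvPolynomial.X p) (subMap F H G n z φ ψ ⟨w, fun e => emap f' e.1⟩) = 1 := by
        intro w hwc
        have hw : ¬ ∃ v, φ v = w := by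
          simpa [Finset.mem_compl, Finset.mem_image] using hwc
        rw [subMap_not_range hw, if_pos]
        · simp
        · intro d
          apply emap_out
          intro hd
          apply hw
          obtain ⟨e₀, he₀⟩ := hd
          have : w ∈ (H.ends e₀).map φ := by
            rw [← hends, he₀]
            exact d.2
          obtain ⟨u, _, hu⟩ := Sym2.mem_map.1 this
          exact ⟨u, hu⟩
      rw [Finset.prod_eq_one h2, mul_one,
        Finset.prod_image (fun a _ b _ h => hφ h)]
      refine Finset.prod_congr rfl fun v _ => ?_
      rw [subMap_good hφ hmem v _ (fun d hd => emap_out f' d.1 hd)]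
      simp only [Sum.elim_inr]
      congr 1
      exact congrArg (fun k => (⟨v, k⟩ : Σ x : V, (H.Inc x → Fin n)))
        (funext fun e => emap_app f' e.1)
    rw [← Finset.sum_subset (Finset.subset_univ (Finset.univ.image emap))
        (fun x _ hx => hvan x hx),
      Finset.sum_image emap_inj]
    exact Finset.sum_congr rfl fun f' _ => (key f').symm
end

section
/- Let F be a field, d ≥ 3, n ≥ 1, and let T be a d-mode tensor over F with n variables per mode. Then the d-th Kronecker power of T is a restriction of the graph tensor of the complete graph K_d with length parameter n²: T^{⊗d} ≤ T_{K_d,n²}. -/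
open Classical Finset MvPolynomial

/-- The complete graph `K_d` on the vertex set `{1,…,d}`: one edge per unordered pair of
distinct vertices. -/
def completeMG (d : ℕ) : Multigraph (Fin d) where
  E := {p : Fin d × Fin d // p.1 < p.2}
  ends := fun p => s(p.1.1, p.1.2)
  loopless := fun p h => absurd (Sym2.mk_isDiag_iff.mp h) (ne_of_lt p.2)

/-!
Write an entry of `T^{⊗d}` as an array `a : Fin d → Fin d → Fin n`, where `a i s` is the index
in mode `i` of the `s`-th tensor factor. Label the edge `{u, w}` (`u < w`) of `K_d` by the pair
`(a u w, a w u) ∈ Fin n × Fin n ≅ Fin (n²)`. Vertex `v` sees exactly the row `a v ·` and the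
column `a · v` off the diagonal, so it can check its row against its own index `h = a v` and feed
the column (completed by `h v`) to `T`. Only the labelling coming from `a` passes all checks, and
it contributes `∏_v T (a · v) = T^{⊗d}(a)`.
-/

theorem sum_gTensor_mul {F V : Type} [Field F] [Fintype V] [DecidableEq V]
    (G : Multigraph V) (m : ℕ) (w : (∀ v, G.Inc v → Fin m) → F) :
    ∑ b, gTensor F G m b * w b = ∑ f : G.E → Fin m, w fun _ e => f e.1 := by
  simp only [gTensor, Finset.sum_mul]
  rw [Finset.sum_comm]
  refine Finset.sum_congr rfl fun f _ => ?_
  have restrict_iff (b : ∀ v, G.Inc v → Fin m) :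
      (∀ v e, b v e = f e.1) ↔ (fun _ e => f e.1) = b := by
    simp only [funext_iff, eq_comm]
  simp only [restrict_iff, ite_mul, one_mul, zero_mul, Finset.sum_ite_eq, Finset.mem_univ,
    if_true]

namespace completeMG

variable {d : ℕ}

def opp {v : Fin d} (e : (completeMG d).Inc v) : Fin d :=
  if e.1.1.1 = v then e.1.1.2 else e.1.1.1

def incOf (v u : Fin d) (h : u ≠ v) : (completeMG d).Inc v :=
  if hlt : u < v then ⟨⟨(u, v), hlt⟩, Sym2.mem_mk_right u v⟩
  else ⟨⟨(v, u), lt_of_le_of_ne (not_lt.mp hlt) h.symm⟩, Sym2.mem_mk_left v u⟩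

theorem opp_incOf (v u : Fin d) (h : u ≠ v) : opp (incOf v u h) = u := by
  by_cases hlt : u < v
  · simp [incOf, opp, hlt, hlt.ne]
  · simp [incOf, opp, hlt]

/-- A pair label of an edge at `v`, read from the side of `v`: the first component belongs to
`v`, the second to the opposite endpoint. -/
def orient {α : Type} {v : Fin d} (e : (completeMG d).Inc v) (x : α × α) : α × α :=
  if e.1.1.1 = v then x else x.swap

def edgeLabel {α : Type} (a : Fin d → Fin d → α) (e : (completeMG d).E) : α × α :=
  (a e.1.1 e.1.2, a e.1.2 e.1.1)

theorem mem_ends {v : Fin d} (e : (completeMG d).Inc v) : v = e.1.1.1 ∨ v = e.1.1.2 :=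
  Sym2.mem_iff.mp e.2

theorem orient_edgeLabel {α : Type} (a : Fin d → Fin d → α) {v : Fin d}
    (e : (completeMG d).Inc v) : orient e (edgeLabel a e.1) = (a v (opp e), a (opp e) v) := by
  rcases mem_ends e with h | h
  · simp [orient, opp, edgeLabel, ← h]
  · have hne : e.1.1.1 ≠ v := fun h' => e.1.2.ne (h'.trans h)
    simp [orient, opp, edgeLabel, hne, ← h]

theorem eq_edgeLabel_iff {α : Type} (a : Fin d → Fin d → α) (x : (completeMG d).E → α × α) :
    x = edgeLabel a ↔ ∀ v (e : (completeMG d).Inc v), (orient e (x e.1)).1 = a v (opp e) := by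
  constructor
  · rintro rfl v e
    rw [orient_edgeLabel]
  · intro hx
    funext e
    have h₁ := hx e.1.1 ⟨e, Sym2.mem_mk_left _ _⟩
    have h₂ := hx e.1.2 ⟨e, Sym2.mem_mk_right _ _⟩
    simp only [orient, opp, e.2.ne, if_true, if_false] at h₁ h₂
    exact Prod.ext h₁ h₂

end completeMG

open completeMG

section kronCoeff

variable {F α : Type} [Field F] [DecidableEq α] {d : ℕ}

noncomputable def kronCoeff (T : (Fin d → α) → F) (v : Fin d)
    (g : (completeMG d).Inc v → α × α) (h : Fin d → α) : F :=
  (if ∀ e, (orient e (g e)).1 = h (opp e) then 1 else 0) *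
    T fun u => if hu : u = v then h v else (orient (incOf v u hu) (g (incOf v u hu))).2

theorem sum_prod_kronCoeff [Fintype α] (T : (Fin d → α) → F)
    (a : Fin d → Fin d → α) :
    ∑ x : (completeMG d).E → α × α, ∏ v, kronCoeff T v (fun e => x e.1) (a v) =
      ∏ v, T fun u => a u v := by
  have column (v : Fin d) :
      (fun u => if hu : u = v then a v v
        else (orient (incOf v u hu) (edgeLabel a (incOf v u hu).1)).2) = fun u => a u v := by
    funext u
    split_ifs with hu
    · rw [hu]
    · rw [orient_edgeLabel, opp_incOf]
  simp only [kronCoeff, Finset.prod_mul_distrib, Finset.prod_boole, Finset.mem_univ,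
    forall_const]
  simp only [← eq_edgeLabel_iff, ite_mul, one_mul, zero_mul, Finset.sum_ite_eq',
    Finset.mem_univ, if_true, column]

end kronCoeff

theorem kronPow_restrict_complete_general (F : Type) [Field F] (d n : ℕ)
    (T : (Fin d → Fin n) → F) :
    Restrict (kronPow T d) (gTensor F (completeMG d) (n ^ 2)) := by
  let pe : Fin n × Fin n ≃ Fin (n ^ 2) := finProdFinEquiv.trans (finCongr (sq n).symm)
  refine ⟨Equiv.refl _, fun v g => kronCoeff T v (pe.symm ∘ g), fun a => ?_⟩
  rw [sum_gTensor_mul, ← ((Equiv.refl _).arrowCongr pe).sum_comp]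
  simpa [kronPow, Function.comp_def] using (sum_prod_kronCoeff T a).symm

/-- Let `d ≥ 3`, `n ≥ 1` and let `T` be a `d`-mode tensor over `F` with
`n` variables per mode. Then the `d`-th Kronecker power of `T` is a restriction of the
graph tensor of the complete graph `K_d` with length parameter `n²`:
`T^{⊗d} ≤ T_{K_d,n²}`. -/
theorem kronPow_restrict_complete (F : Type) [Field F] (d n : ℕ) (hd : 3 ≤ d)
    (hn : 1 ≤ n) (T : (Fin d → Fin n) → F) :
    Restrict (kronPow T d) (gTensor F (completeMG d) (n ^ 2)) :=
  kronPow_restrict_complete_general F d n T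
end

section
/- Let F be a field and let k ≥ 2 and q ≥ 2 be integers. Work in the polynomial ring over F in the variable ε and the variables x^{(u)}_0, x^{(u)}_1, …, x^{(u)}_q, x^{(u)}_{q+1} for u ∈ {1,…,k}, and define the big Coppersmith–Winograd k-tensor CW_q^k = Σ_{1≤u<v≤k} (Σ_{i=1}^q x^{(u)}_i·x^{(v)}_i)·Π_{w ∈ {1,…,k}\{u,v}} x^{(w)}_0 + Σ_{u=1}^k x^{(u)}_{q+1}·Π_{w ≠ u} x^{(w)}_0. Then there exists a polynomial E in ε and the x-variables such that Σ_{i=1}^q ε·Π_{u=1}^k (x^{(u)}_0 + ε²·x^{(u)}_i) − Π_{u=1}^k (x^{(u)}_0 + ε³·Σ_{i=1}^q x^{(u)}_i) + (1 − q·ε)·Π_{u=1}^k (x^{(u)}_0 + ε⁵·x^{(u)}_{q+1}) = ε⁵·CW_q^k + ε⁶·E. In particular, CW_q^k is an ε-degeneration of a sum of q+2 rank-one tensors, so its border rank is at most q+2. -/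
/-!
Expand each product `∏_u (x^{(u)}_0 + c·y^{(u)})` to second order in `c`. Modulo `ε⁶` the
constant terms cancel (`qε − 1 + (1 − qε) = 0`), the `ε³` terms cancel because the coefficient
of `c` is additive in `y`, and the `ε⁵` terms are the quadratic coefficients of the first `q`
products together with the linear coefficient of the last one, which add up to `CW_q^k`.
-/

open Finset

namespace CWk

variable (F : Type) [Field F] (k q : ℕ)

/-- The variable `x^{(u)}_j`, for `u ∈ {1,…,k}` and `j ∈ {0,1,…,q+1}`, viewed in the
polynomial ring over `F` that also contains the degeneration variable `ε`. -/
noncomputable def xv (u : Fin k) (j : Fin (q + 2)) :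
    MvPolynomial (Option (Fin k × Fin (q + 2))) F :=
  MvPolynomial.X (some (u, j))

/-- The degeneration variable `ε`. -/
noncomputable def eps : MvPolynomial (Option (Fin k × Fin (q + 2))) F :=
  MvPolynomial.X none

/-- The index `i ∈ {1,…,q}` inside `{0,…,q+1}`. -/
def midIdx (i : Fin q) : Fin (q + 2) := i.succ.castSucc

/-- The big Coppersmith–Winograd `k`-tensor
`CW_q^k = Σ_{u<v} (Σ_{i=1}^q x^{(u)}_i x^{(v)}_i)·Π_{w∉{u,v}} x^{(w)}_0
          + Σ_u x^{(u)}_{q+1}·Π_{w≠u} x^{(w)}_0`. -/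
noncomputable def CW : MvPolynomial (Option (Fin k × Fin (q + 2))) F :=
  (∑ u : Fin k, ∑ v : Fin k,
    if u < v then
      (∑ i : Fin q, xv F k q u (midIdx q i) * xv F k q v (midIdx q i)) *
        ∏ w ∈ univ \ {u, v}, xv F k q w 0
    else 0)
  + ∑ u : Fin k, xv F k q u (Fin.last (q + 1)) * ∏ w ∈ univ \ {u}, xv F k q w 0

section Expansion

variable {ι R : Type*} [CommRing R] [LinearOrder ι]

/-- The coefficient of `c` in `∏ u ∈ s, (a u + c * b u)`. -/
def linCoeff (a b : ι → R) (s : Finset ι) : R :=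
  ∑ u ∈ s, b u * ∏ w ∈ s \ {u}, a w

/-- For `B u v = b u * b v`, the coefficient of `c ^ 2` in `∏ u ∈ s, (a u + c * b u)`. -/
def quadCoeff (a : ι → R) (B : ι → ι → R) (s : Finset ι) : R :=
  ∑ u ∈ s, ∑ v ∈ s, if u < v then B u v * ∏ w ∈ s \ {u, v}, a w else 0

theorem linCoeff_sum {κ : Type*} (a : ι → R) (b : κ → ι → R) (I : Finset κ) (s : Finset ι) :
    ∑ i ∈ I, linCoeff a (b i) s = linCoeff a (fun u => ∑ i ∈ I, b i u) s := by
  simp only [linCoeff, sum_mul]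
  exact sum_comm

theorem quadCoeff_sum {κ : Type*} (a : ι → R) (B : κ → ι → ι → R) (I : Finset κ)
    (s : Finset ι) :
    ∑ i ∈ I, quadCoeff a (B i) s = quadCoeff a (fun u v => ∑ i ∈ I, B i u v) s := by
  simp only [quadCoeff]
  rw [sum_comm]
  refine sum_congr rfl fun u _ => ?_
  rw [sum_comm]
  refine sum_congr rfl fun v _ => ?_
  by_cases h : u < v <;> simp [h, sum_mul]

theorem linCoeff_insert {x : ι} {t : Finset ι} (hx : x ∉ t) (a b : ι → R) :
    linCoeff a b (insert x t) = b x * ∏ u ∈ t, a u + a x * linCoeff a b t := by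
  rw [linCoeff, linCoeff, sum_insert hx, show insert x t \ {x} = t by grind, mul_sum]
  congr 1
  refine sum_congr rfl fun u hu => ?_
  rw [show insert x t \ {u} = insert x (t \ {u}) by grind, prod_insert (by grind)]
  ring

theorem quadCoeff_insert {x : ι} {t : Finset ι} (hx : x ∉ t) (a : ι → R) {B : ι → ι → R}
    (hB : ∀ u v, B u v = B v u) :
    quadCoeff a B (insert x t) =
      ∑ v ∈ t, B x v * ∏ w ∈ t \ {v}, a w + a x * quadCoeff a B t := by
  have row_x : ∑ v ∈ insert x t, (if x < v then B x v * ∏ w ∈ insert x t \ {x, v}, a w else 0)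
      = ∑ v ∈ t, if x < v then B x v * ∏ w ∈ t \ {v}, a w else 0 := by
    rw [sum_insert hx, if_neg (lt_irrefl x), zero_add]
    refine sum_congr rfl fun v hv => ?_
    rw [show insert x t \ {x, v} = t \ {v} by grind]
  have row_u : ∀ u ∈ t,
      ∑ v ∈ insert x t, (if u < v then B u v * ∏ w ∈ insert x t \ {u, v}, a w else 0)
        = (if u < x then B x u * ∏ w ∈ t \ {u}, a w else 0)
          + a x * ∑ v ∈ t, if u < v then B u v * ∏ w ∈ t \ {u, v}, a w else 0 := by
    intro u hu
    rw [sum_insert hx, mul_sum, show insert x t \ {u, x} = t \ {u} by grind, hB u x]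
    congr 1
    refine sum_congr rfl fun v hv => ?_
    rw [show insert x t \ {u, v} = insert x (t \ {u, v}) by grind, prod_insert (by grind)]
    split_ifs <;> ring
  have row_pair : ∀ v ∈ t, ((if x < v then B x v * ∏ w ∈ t \ {v}, a w else 0)
      + if v < x then B x v * ∏ w ∈ t \ {v}, a w else 0) = B x v * ∏ w ∈ t \ {v}, a w := by
    intro v hv
    rcases (show x ≠ v by grind).lt_or_gt with h | h <;> simp [h, h.not_gt]
  rw [quadCoeff, quadCoeff, sum_insert hx, row_x, sum_congr rfl row_u, sum_add_distrib,
    ← add_assoc, ← sum_add_distrib, sum_congr rfl row_pair, mul_sum]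

theorem exists_prod_add_mul_eq (c : R) (a b : ι → R) (s : Finset ι) :
    ∃ E, ∏ u ∈ s, (a u + c * b u) = ∏ u ∈ s, a u + c * linCoeff a b s
      + c ^ 2 * quadCoeff a (fun u v => b u * b v) s + c ^ 3 * E := by
  induction s using Finset.induction_on with
  | empty => exact ⟨0, by simp [linCoeff, quadCoeff]⟩
  | insert x t hx ih =>
    obtain ⟨E, hE⟩ := ih
    have hrow : ∑ v ∈ t, b x * b v * ∏ w ∈ t \ {v}, a w = b x * linCoeff a b t := by
      simp only [linCoeff, mul_sum, mul_assoc]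
    refine ⟨b x * quadCoeff a (fun u v => b u * b v) t + (a x + c * b x) * E, ?_⟩
    rw [prod_insert hx, prod_insert hx, hE, linCoeff_insert hx,
      quadCoeff_insert hx a fun u v => mul_comm (b u) (b v), hrow]
    ring

theorem exists_prod_add_mul_eq_linear (c : R) (a b : ι → R) (s : Finset ι) :
    ∃ E, ∏ u ∈ s, (a u + c * b u) = ∏ u ∈ s, a u + c * linCoeff a b s + c ^ 2 * E := by
  obtain ⟨E, hE⟩ := exists_prod_add_mul_eq c a b s
  exact ⟨quadCoeff a (fun u v => b u * b v) s + c * E, by rw [hE]; ring⟩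

end Expansion

theorem cw_degeneration :
    ∃ E : MvPolynomial (Option (Fin k × Fin (q + 2))) F,
      (∑ i : Fin q, eps F k q *
          ∏ u : Fin k, (xv F k q u 0 + (eps F k q) ^ 2 * xv F k q u (midIdx q i)))
      - (∏ u : Fin k,
          (xv F k q u 0 + (eps F k q) ^ 3 * ∑ i : Fin q, xv F k q u (midIdx q i)))
      + (1 - (q : MvPolynomial (Option (Fin k × Fin (q + 2))) F) * eps F k q) *
          ∏ u : Fin k, (xv F k q u 0 + (eps F k q) ^ 5 * xv F k q u (Fin.last (q + 1)))
      = (eps F k q) ^ 5 * CW F k q + (eps F k q) ^ 6 * E := by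
  set e := eps F k q
  choose E₁ hE₁ using fun i : Fin q =>
    exists_prod_add_mul_eq (e ^ 2) (fun u => xv F k q u 0) (fun u => xv F k q u (midIdx q i)) univ
  obtain ⟨E₂, hE₂⟩ := exists_prod_add_mul_eq_linear (e ^ 3) (fun u => xv F k q u 0)
    (fun u => ∑ i, xv F k q u (midIdx q i)) univ
  obtain ⟨E₃, hE₃⟩ := exists_prod_add_mul_eq_linear (e ^ 5) (fun u => xv F k q u 0)
    (fun u => xv F k q u (Fin.last (q + 1))) univ
  have hCW : CW F k q = ∑ i, quadCoeff (fun u => xv F k q u 0)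
        (fun u v => xv F k q u (midIdx q i) * xv F k q v (midIdx q i)) univ
      + linCoeff (fun u => xv F k q u 0) (fun u => xv F k q u (Fin.last (q + 1))) univ := by
    rw [quadCoeff_sum]
    rfl
  simp only [hE₁, hE₂, hE₃, mul_add, sum_add_distrib, ← mul_sum, sum_const, card_univ,
    Fintype.card_fin, nsmul_eq_mul]
  refine ⟨e * ∑ i, E₁ i - E₂ + (1 - q * e) * e ^ 4 * E₃
    - q * linCoeff (fun u => xv F k q u 0) (fun u => xv F k q u (Fin.last (q + 1))) univ, ?_⟩
  rw [hCW, ← linCoeff_sum]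
  ring

end CWk
end

section
/- Let F be a field and n ≥ 1. Let G be the simple (n+2) × (n+2) grid graph, with vertices v_{i,j} for 0 ≤ i,j ≤ n+1 and edges between orthogonally adjacent vertices. Then the n × n permanent tensor per_n = Σ_{π ∈ S_n} Π_{i=1}^n x_{i,π(i)} is a simple projection of the graph tensor T_{G,2}: per_n ≤_s T_{G,2}. -/
open Classical Finset MvPolynomial

/-- Orthogonal adjacency in the grid: `|i−i'| + |j−j'| = 1`. -/
abbrev gridAdj {m : ℕ} (a b : Fin m × Fin m) : Prop :=
  ((a.1 : ℤ) - (b.1 : ℤ)).natAbs + ((a.2 : ℤ) - (b.2 : ℤ)).natAbs = 1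

/-- A lexicographic comparison used to pick exactly one ordered representative of each
unordered adjacent pair. -/
abbrev lexLt {m : ℕ} (a b : Fin m × Fin m) : Prop :=
  a.1 < b.1 ∨ (a.1 = b.1 ∧ a.2 < b.2)

/-- The simple `m × m` grid graph: vertices `(i,j)`, edges between orthogonally adjacent
vertices. -/
def gridMG (m : ℕ) : Multigraph (Fin m × Fin m) where
  E := {p : (Fin m × Fin m) × (Fin m × Fin m) // gridAdj p.1 p.2 ∧ lexLt p.1 p.2}
  ends := fun p => s(p.1.1, p.1.2)
  loopless := fun p h => by
    have h' := Sym2.mk_isDiag_iff.mp h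
    rcases p.2.2 with h1 | ⟨-, h2⟩
    · rw [h'] at h1; exact lt_irrefl _ h1
    · rw [h'] at h2; exact lt_irrefl _ h2

/-- The `n × n` permanent tensor `per_n = Σ_{π ∈ S_n} Π_{i=1}^n x_{i,π(i)}`, given by its
coefficient array: the coefficient of `Π_i x_{i, a(i)}` is the number of permutations `π`
with `π(i) = a(i)` for all `i`. -/
noncomputable def permTensor (F : Type) [Field F] (n : ℕ) : (Fin n → Fin n) → F :=
  fun a => ∑ π : Equiv.Perm (Fin n), if ∀ i, a i = π i then 1 else 0


/-!
Label every edge of the grid by `0` or `1`. The substitution keeps, at an interior vertex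
`(i, j)`, the local pattern "turn" (`0` on the edges coming in from the left and from above, `1`
on the edges going out to the right and downwards) as the variable `x_{i-1,j-1}`, every pattern
passing straight through (left = right, up = down) as `1`, and at a boundary vertex one prescribed
pass as `1` (the boundary reads `1` exactly on the edges entering the last column and the last
row from the interior); every other pattern becomes `0`. In a labelling all of whose patterns
survive, the labels along an interior row can only step up from `0` to `1`, they start at `0` and
end at `1`, so the row turns exactly once; the same holds for every column. Hence the turns form a
permutation matrix, the surviving labellings correspond to the permutations `π`, and the labelling
of `π` contributes `∏ x_{k, π k}`. All variables substituted into the mode of `(i, j)` lie in row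
`i - 1`, so the projection is simple.
-/

section TensorPolynomials

variable {F : Type} [Field F]

theorem toPoly_eq_sum_prod_X {ι σ : Type} [Fintype ι] [DecidableEq ι] {Z : ι → Type}
    [∀ i, Fintype (Z i)] [Fintype σ] (g : σ → ∀ i, Z i) (T : (∀ i, Z i) → F)
    (hT : ∀ a, T a = ∑ s, if a = g s then 1 else 0) :
    toPoly T = ∑ s, ∏ i, (X ⟨i, g s i⟩ : MvPolynomial (Σ i, Z i) F) := by
  simp only [toPoly, hT, map_sum, Finset.sum_mul, apply_ite C, map_one, map_zero, ite_mul,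
    one_mul, zero_mul]
  rw [Finset.sum_comm]
  simp

namespace Multigraph

variable {V : Type} {α : Type}

def localLabel (G : Multigraph V) (f : G.E → α) (v : V) : G.Inc v → α := fun e => f e.1

theorem apply_eq_of_localLabel_eq {G : Multigraph V} {f : G.E → α} {v : V} {y : G.Inc v → α}
    (h : G.localLabel f v = y) {e : G.E} (he : v ∈ G.ends e) : f e = y ⟨e, he⟩ :=
  congrFun h ⟨e, he⟩

theorem toPoly_gTensor [Fintype V] [DecidableEq V] (G : Multigraph V) (m : ℕ) :
    toPoly (gTensor F G m) = ∑ f : G.E → Fin m, ∏ v, X ⟨v, G.localLabel f v⟩ := by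
  refine toPoly_eq_sum_prod_X (fun f v => G.localLabel f v) _ fun a => ?_
  exact Finset.sum_congr rfl fun f _ => by simp only [funext_iff, localLabel]; congr

end Multigraph

theorem toPoly_permTensor (n : ℕ) :
    toPoly (permTensor F n) = ∑ π : Equiv.Perm (Fin n), ∏ k, X ⟨k, π k⟩ :=
  toPoly_eq_sum_prod_X (fun π : Equiv.Perm (Fin n) => ⇑π) _ fun _ =>
    Finset.sum_congr rfl fun _ _ => by simp only [funext_iff]

end TensorPolynomials

theorem Nat.exists_threshold {p : ℕ → Prop} {n : ℕ} (h0 : ¬p 0) (hn : p n)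
    (hmono : ∀ j < n, p j → p (j + 1)) : ∃ c, 1 ≤ c ∧ c ≤ n ∧ ∀ j ≤ n, (p j ↔ c ≤ j) := by
  classical
  have hex : ∃ j, p j := ⟨n, hn⟩
  have hc0 : Nat.find hex ≠ 0 := fun h => h0 (h ▸ Nat.find_spec hex)
  refine ⟨Nat.find hex, by omega, Nat.find_min' hex hn, fun j hj => ⟨Nat.find_min' hex, ?_⟩⟩
  intro hcj
  induction j, hcj using Nat.le_induction with
  | base => exact Nat.find_spec hex
  | succ m _ ih => exact hmono m (by omega) (ih (by omega))

theorem Fin.two_eq_of_iff {x y : Fin 2} (h : x = 1 ↔ y = 1) : x = y := by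
  fin_cases x <;> fin_cases y <;> simp_all

theorem Fin.two_eq_zero_iff {x : Fin 2} : x = 0 ↔ x ≠ 1 := by
  fin_cases x <;> simp

namespace PermGrid

open Equiv

variable {n : ℕ} {F : Type} [Field F]

abbrev Vertex (n : ℕ) : Type := Fin (n + 2) × Fin (n + 2)

abbrev Edge (n : ℕ) : Type := (gridMG (n + 2)).E

-- The tail `e.val.1` of an edge lies above or to the left of its head `e.val.2`.
def IsVert (e : Edge n) : Prop := e.val.1.2 = e.val.2.2

theorem head_of_isVert {e : Edge n} (h : IsVert e) :
    (e.val.2.1 : ℕ) = e.val.1.1 + 1 ∧ e.val.2.2 = e.val.1.2 := by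
  obtain ⟨hadj, hlex⟩ := e.prop
  simp only [IsVert, Fin.ext_iff] at h
  simp only [lexLt, Fin.lt_def, Fin.ext_iff] at hlex
  exact ⟨by omega, Fin.ext h.symm⟩

theorem head_of_not_isVert {e : Edge n} (h : ¬IsVert e) :
    e.val.2.1 = e.val.1.1 ∧ (e.val.2.2 : ℕ) = e.val.1.2 + 1 := by
  obtain ⟨hadj, hlex⟩ := e.prop
  simp only [IsVert, Fin.ext_iff] at h
  simp only [lexLt, Fin.lt_def, Fin.ext_iff] at hlex
  exact ⟨Fin.ext (by omega), by omega⟩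

theorem mem_ends_of_tail_eq {v : Vertex n} {e : Edge n} (h : e.val.1 = v) :
    v ∈ (gridMG (n + 2)).ends e :=
  h ▸ Sym2.mem_mk_left _ _

theorem mem_ends_of_head_eq {v : Vertex n} {e : Edge n} (h : e.val.2 = v) :
    v ∈ (gridMG (n + 2)).ends e :=
  h ▸ Sym2.mem_mk_right _ _

theorem tail_of_mem_ends {v : Vertex n} {e : Edge n} (h : v ∈ (gridMG (n + 2)).ends e) :
    e.val.1 = v ∨ (¬IsVert e ∧ (e.val.1.1 : ℕ) = v.1 ∧ (e.val.1.2 : ℕ) + 1 = v.2) ∨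
      (IsVert e ∧ (e.val.1.1 : ℕ) + 1 = v.1 ∧ (e.val.1.2 : ℕ) = v.2) := by
  rcases Sym2.mem_iff.mp h with rfl | rfl
  · exact Or.inl rfl
  · by_cases hv : IsVert e
    · obtain ⟨h1, h2⟩ := head_of_isVert hv
      exact Or.inr (Or.inr ⟨hv, h1.symm, congrArg Fin.val h2.symm⟩)
    · obtain ⟨h1, h2⟩ := head_of_not_isVert hv
      exact Or.inr (Or.inl ⟨hv, congrArg Fin.val h1.symm, h2.symm⟩)

def hEdge (i j : ℕ) (hi : i < n + 2) (hj : j < n + 1) : Edge n :=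
  ⟨((⟨i, hi⟩, ⟨j, by omega⟩), (⟨i, hi⟩, ⟨j + 1, by omega⟩)),
    by constructor <;> simp [gridAdj, lexLt]⟩

def vEdge (i j : ℕ) (hi : i < n + 1) (hj : j < n + 2) : Edge n :=
  ⟨((⟨i, by omega⟩, ⟨j, hj⟩), (⟨i + 1, by omega⟩, ⟨j, hj⟩)),
    by constructor <;> simp [gridAdj, lexLt]⟩

theorem isVert_vEdge (i j : ℕ) (hi : i < n + 1) (hj : j < n + 2) : IsVert (vEdge i j hi hj) :=
  rfl

theorem not_isVert_hEdge (i j : ℕ) (hi : i < n + 2) (hj : j < n + 1) :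
    ¬IsVert (hEdge i j hi hj) := by
  simp [IsVert, hEdge]

theorem tail_snd_lt_of_not_isVert {e : Edge n} (h : ¬IsVert e) : (e.val.1.2 : ℕ) < n + 1 := by
  have := e.val.2.2.isLt
  have := (head_of_not_isVert h).2
  omega

theorem tail_fst_lt_of_isVert {e : Edge n} (h : IsVert e) : (e.val.1.1 : ℕ) < n + 1 := by
  have := e.val.2.1.isLt
  have := (head_of_isVert h).1
  omega

theorem eq_hEdge {e : Edge n} (h : ¬IsVert e) :
    e = hEdge e.val.1.1 e.val.1.2 e.val.1.1.isLt (tail_snd_lt_of_not_isVert h) := by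
  obtain ⟨h1, h2⟩ := head_of_not_isVert h
  exact Subtype.ext (Prod.ext rfl (Prod.ext h1 (Fin.ext h2)))

theorem eq_vEdge {e : Edge n} (h : IsVert e) :
    e = vEdge e.val.1.1 e.val.1.2 (tail_fst_lt_of_isVert h) e.val.1.2.isLt := by
  obtain ⟨h1, h2⟩ := head_of_isVert h
  exact Subtype.ext (Prod.ext rfl (Prod.ext (Fin.ext h1) h2))

def hLabel (f : Edge n → Fin 2) (i j : ℕ) : Fin 2 :=
  if h : i < n + 2 ∧ j < n + 1 then f (hEdge i j h.1 h.2) else 0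

def vLabel (f : Edge n → Fin 2) (i j : ℕ) : Fin 2 :=
  if h : i < n + 1 ∧ j < n + 2 then f (vEdge i j h.1 h.2) else 0

theorem hLabel_eq (f : Edge n → Fin 2) {i j : ℕ} (hi : i < n + 2) (hj : j < n + 1) :
    hLabel f i j = f (hEdge i j hi hj) :=
  dif_pos ⟨hi, hj⟩

theorem vLabel_eq (f : Edge n → Fin 2) {i j : ℕ} (hi : i < n + 1) (hj : j < n + 2) :
    vLabel f i j = f (vEdge i j hi hj) :=
  dif_pos ⟨hi, hj⟩

theorem apply_eq_hLabel (f : Edge n → Fin 2) {e : Edge n} (h : ¬IsVert e) :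
    f e = hLabel f e.val.1.1 e.val.1.2 := by
  rw [hLabel_eq f e.val.1.1.isLt (tail_snd_lt_of_not_isVert h), ← eq_hEdge h]

theorem apply_eq_vLabel (f : Edge n → Fin 2) {e : Edge n} (h : IsVert e) :
    f e = vLabel f e.val.1.1 e.val.1.2 := by
  rw [vLabel_eq f (tail_fst_lt_of_isVert h) e.val.1.2.isLt, ← eq_vEdge h]

def IsInterior (v : Vertex n) : Prop :=
  1 ≤ (v.1 : ℕ) ∧ (v.1 : ℕ) ≤ n ∧ 1 ≤ (v.2 : ℕ) ∧ (v.2 : ℕ) ≤ n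

def turnPat (v : Vertex n) : (gridMG (n + 2)).Inc v → Fin 2 :=
  fun e => if e.1.val.1 = v then 1 else 0

noncomputable def passPat (v : Vertex n) (a b : Fin 2) : (gridMG (n + 2)).Inc v → Fin 2 :=
  fun e => if IsVert e.1 then a else b

theorem turnPat_apply_of_tail {v : Vertex n} {e : Edge n} (he : v ∈ (gridMG (n + 2)).ends e)
    (h : e.val.1 = v) : turnPat v ⟨e, he⟩ = 1 :=
  if_pos h

theorem turnPat_apply_of_head {v : Vertex n} {e : Edge n} (he : v ∈ (gridMG (n + 2)).ends e)
    (h : e.val.2 = v) : turnPat v ⟨e, he⟩ = 0 :=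
  if_neg fun h' => (gridMG (n + 2)).loopless e (Sym2.mk_isDiag_iff.mpr (h'.trans h.symm))

theorem passPat_apply_of_isVert {v : Vertex n} {e : Edge n} (he : v ∈ (gridMG (n + 2)).ends e)
    (a b : Fin 2) (h : IsVert e) : passPat v a b ⟨e, he⟩ = a :=
  if_pos h

theorem passPat_apply_of_not_isVert {v : Vertex n} {e : Edge n}
    (he : v ∈ (gridMG (n + 2)).ends e) (a b : Fin 2) (h : ¬IsVert e) :
    passPat v a b ⟨e, he⟩ = b :=
  if_neg h

theorem passPat_ne_turnPat {v : Vertex n} (h1 : 1 ≤ (v.1 : ℕ)) (hn : (v.1 : ℕ) ≤ n)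
    (a b : Fin 2) : passPat v a b ≠ turnPat v := by
  intro h
  have hv : (v.1 : ℕ) < n + 1 := by omega
  have hv' : (v.1 : ℕ) - 1 < n + 1 := by omega
  have hupv : (vEdge (v.1 - 1) v.2 hv' v.2.isLt).val.2 = v :=
    Prod.ext (Fin.ext (Nat.sub_add_cancel h1)) rfl
  have hdown : a = 1 := (passPat_apply_of_isVert _ a b (isVert_vEdge _ _ _ _)).symm.trans
    ((congrFun h ⟨vEdge v.1 v.2 hv v.2.isLt, mem_ends_of_tail_eq rfl⟩).trans
      (turnPat_apply_of_tail _ rfl))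
  have hup : a = 0 := (passPat_apply_of_isVert _ a b (isVert_vEdge _ _ _ _)).symm.trans
    ((congrFun h ⟨vEdge (v.1 - 1) v.2 hv' v.2.isLt, mem_ends_of_head_eq hupv⟩).trans
      (turnPat_apply_of_head _ hupv))
  exact absurd (hdown.symm.trans hup) (by decide)

def boundaryVert (v : Vertex n) : Fin 2 :=
  if (v.1 : ℕ) = n + 1 ∧ 1 ≤ (v.2 : ℕ) ∧ (v.2 : ℕ) ≤ n then 1 else 0

def boundaryHoriz (v : Vertex n) : Fin 2 :=
  if (v.2 : ℕ) = n + 1 ∧ 1 ≤ (v.1 : ℕ) ∧ (v.1 : ℕ) ≤ n then 1 else 0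

structure Admissible (f : Edge n → Fin 2) : Prop where
  interior (v : Vertex n) : IsInterior v →
    (gridMG (n + 2)).localLabel f v = turnPat v ∨
      ∃ a b, (gridMG (n + 2)).localLabel f v = passPat v a b
  boundary (v : Vertex n) : ¬IsInterior v →
    (gridMG (n + 2)).localLabel f v = passPat v (boundaryVert v) (boundaryHoriz v)

noncomputable def gridSubst (F : Type) [Field F] (n : ℕ) :
    (Σ v : Vertex n, (gridMG (n + 2)).Inc v → Fin 2) → F ⊕ (Σ _ : Fin n, Fin n)
  | ⟨v, y⟩ =>
    if h : IsInterior v ∧ y = turnPat v then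
      Sum.inr ⟨⟨v.1 - 1, by have := h.1; unfold IsInterior at this; omega⟩,
        ⟨v.2 - 1, by have := h.1; unfold IsInterior at this; omega⟩⟩
    else if (IsInterior v ∧ ∃ a b, y = passPat v a b) ∨
        (¬IsInterior v ∧ y = passPat v (boundaryVert v) (boundaryHoriz v)) then
      Sum.inl 1
    else Sum.inl 0

theorem gridSubst_eq_inr {v : Vertex n} {y : (gridMG (n + 2)).Inc v → Fin 2}
    {p : Σ _ : Fin n, Fin n} (h : gridSubst F n ⟨v, y⟩ = Sum.inr p) :
    (p.1 : ℕ) = v.1 - 1 := by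
  simp only [gridSubst] at h
  split_ifs at h
  cases h
  rfl

theorem admissible_of_gridSubst_ne_zero {f : Edge n → Fin 2}
    (h : ∀ v, gridSubst F n ⟨v, (gridMG (n + 2)).localLabel f v⟩ ≠ Sum.inl 0) :
    Admissible f where
  interior v hv := by
    have := h v
    simp only [gridSubst] at this
    split_ifs at this <;> tauto
  boundary v hv := by
    have := h v
    simp only [gridSubst] at this
    split_ifs at this <;> tauto

def stepLabel (σ : Perm (Fin n)) (r c : ℕ) : Fin 2 :=
  if ∃ k : Fin n, (k : ℕ) + 1 = r ∧ (σ k : ℕ) + 1 ≤ c then 1 else 0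

def IsTurn (σ : Perm (Fin n)) (r c : ℕ) : Prop :=
  ∃ k : Fin n, (k : ℕ) + 1 = r ∧ (σ k : ℕ) + 1 = c

/-- In row `k + 1` the horizontal edges to the right of the turn `(k + 1, π k + 1)` carry `1`,
in column `π k + 1` the vertical edges below it carry `1`, and all other edges carry `0`. -/
noncomputable def labelOf (π : Perm (Fin n)) : Edge n → Fin 2 := fun e =>
  if IsVert e then stepLabel π.symm e.val.1.2 e.val.1.1 else stepLabel π e.val.1.1 e.val.1.2

theorem stepLabel_succ (σ : Perm (Fin n)) (k : Fin n) (c : ℕ) :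
    stepLabel σ (k + 1) c = if (σ k : ℕ) + 1 ≤ c then 1 else 0 := by
  refine if_congr ⟨fun ⟨l, hl, hc⟩ => ?_, fun h => ⟨k, rfl, h⟩⟩ rfl rfl
  rwa [Fin.ext (Nat.succ_injective hl)] at hc

theorem isTurn_symm {σ : Perm (Fin n)} {r c : ℕ} : IsTurn σ.symm c r ↔ IsTurn σ r c :=
  ⟨fun ⟨k, hk, hc⟩ => ⟨σ.symm k, hc, by simpa using hk⟩,
    fun ⟨k, hk, hc⟩ => ⟨σ k, hc, by simpa using hk⟩⟩

theorem IsTurn.isInterior {σ : Perm (Fin n)} {v : Vertex n} (h : IsTurn σ v.1 v.2) :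
    IsInterior v := by
  obtain ⟨k, hk, hc⟩ := h
  have := (σ k).isLt
  unfold IsInterior
  omega

theorem stepLabel_of_isTurn {σ : Perm (Fin n)} {r c : ℕ} (h : IsTurn σ r c) :
    stepLabel σ r c = 1 ∧ stepLabel σ r (c - 1) = 0 := by
  obtain ⟨k, rfl, rfl⟩ := h
  simp [stepLabel_succ]

theorem stepLabel_pred_of_not_isTurn {σ : Perm (Fin n)} {r c : ℕ} (h : ¬IsTurn σ r c) :
    stepLabel σ r (c - 1) = stepLabel σ r c :=
  if_congr (exists_congr fun k => by
    have := not_and.mp (fun hk => h ⟨k, hk⟩)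
    omega) rfl rfl

theorem stepLabel_of_not_interior (σ : Perm (Fin n)) {r c : ℕ} (hc : c ≤ n + 1)
    (h : ¬(1 ≤ r ∧ r ≤ n ∧ 1 ≤ c ∧ c ≤ n)) :
    stepLabel σ r c = if c = n + 1 ∧ 1 ≤ r ∧ r ≤ n then 1 else 0 := by
  refine if_congr ⟨fun ⟨k, hk, hc'⟩ => ?_, fun ⟨hc', hr1, hrn⟩ => ⟨⟨r - 1, by omega⟩, ?_, ?_⟩⟩
    rfl rfl
  · have := (σ k).isLt
    have := k.isLt
    omega
  · simp only
    omega
  · have := (σ ⟨r - 1, by omega⟩).isLt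
    omega

theorem localLabel_labelOf (π : Perm (Fin n)) (v : Vertex n) :
    (gridMG (n + 2)).localLabel (labelOf π) v =
      if IsTurn π v.1 v.2 then turnPat v
      else passPat v (stepLabel π.symm v.2 v.1) (stepLabel π v.1 v.2) := by
  funext ⟨e, he⟩
  by_cases hturn : IsTurn π v.1 v.2
  · have hturn' := isTurn_symm.mpr hturn
    simp only [if_pos hturn, Multigraph.localLabel, labelOf, turnPat]
    rcases tail_of_mem_ends he with rfl | ⟨hv, h1, h2⟩ | ⟨hv, h1, h2⟩
    · by_cases hv : IsVert e
      · rw [if_pos hv, if_pos rfl, (stepLabel_of_isTurn hturn').1]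
      · rw [if_neg hv, if_pos rfl, (stepLabel_of_isTurn hturn).1]
    · rw [if_neg hv, if_neg (fun h => by rw [h] at h2; omega), h1,
        show (e.val.1.2 : ℕ) = v.2 - 1 by omega, (stepLabel_of_isTurn hturn).2]
    · rw [if_pos hv, if_neg (fun h => by rw [h] at h1; omega), h2,
        show (e.val.1.1 : ℕ) = v.1 - 1 by omega, (stepLabel_of_isTurn hturn').2]
  · have hturn' : ¬IsTurn π.symm v.2 v.1 := fun h => hturn (isTurn_symm.mp h)
    simp only [if_neg hturn, Multigraph.localLabel, labelOf, passPat]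
    rcases tail_of_mem_ends he with rfl | ⟨hv, h1, h2⟩ | ⟨hv, h1, h2⟩
    · rfl
    · rw [if_neg hv, if_neg hv, h1, show (e.val.1.2 : ℕ) = v.2 - 1 by omega,
        stepLabel_pred_of_not_isTurn hturn]
    · rw [if_pos hv, if_pos hv, h2, show (e.val.1.1 : ℕ) = v.1 - 1 by omega,
        stepLabel_pred_of_not_isTurn hturn']

theorem admissible_labelOf (π : Perm (Fin n)) : Admissible (labelOf π) where
  interior v _ := by
    rw [localLabel_labelOf]
    split_ifs
    exacts [Or.inl rfl, Or.inr ⟨_, _, rfl⟩]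
  boundary v hv := by
    have hv' : ¬(1 ≤ (v.2 : ℕ) ∧ (v.2 : ℕ) ≤ n ∧ 1 ≤ (v.1 : ℕ) ∧ (v.1 : ℕ) ≤ n) := by
      unfold IsInterior at hv
      tauto
    rw [localLabel_labelOf, if_neg (fun h => hv h.isInterior), boundaryVert, boundaryHoriz,
      stepLabel_of_not_interior _ (Nat.le_of_lt_succ v.1.isLt) hv',
      stepLabel_of_not_interior _ (Nat.le_of_lt_succ v.2.isLt) hv]

theorem labelOf_hEdge (π : Perm (Fin n)) (i j : ℕ) (hi : i < n + 2) (hj : j < n + 1) :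
    labelOf π (hEdge i j hi hj) = stepLabel π i j :=
  if_neg (not_isVert_hEdge i j hi hj)

theorem labelOf_injective : Function.Injective (labelOf (n := n)) := by
  intro π σ h
  ext k
  have hk := (π k).isLt
  have hk' := (σ k).isLt
  have key : ∀ c ≤ n, stepLabel π (k + 1) c = stepLabel σ (k + 1) c := fun c hc => by
    rw [← labelOf_hEdge π _ _ (by omega) (by omega), ← labelOf_hEdge σ _ _ (by omega) (by omega),
      h]
  have h1 := key (π k + 1) (by omega)
  have h2 := key (σ k + 1) (by omega)
  simp only [stepLabel_succ, le_refl, if_true] at h1 h2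
  split_ifs at h1 h2 <;> omega

def turnVertex (π : Perm (Fin n)) (k : Fin n) : Vertex n :=
  (⟨k + 1, by omega⟩, ⟨π k + 1, by omega⟩)

theorem turnVertex_injective (π : Perm (Fin n)) : Function.Injective (turnVertex π) :=
  fun _ _ h => Fin.ext (Nat.succ_injective (congrArg (fun v => (v.1 : ℕ)) h))

theorem gridSubst_labelOf_turnVertex (π : Perm (Fin n)) (k : Fin n) :
    gridSubst F n ⟨turnVertex π k, (gridMG (n + 2)).localLabel (labelOf π) (turnVertex π k)⟩ =
      Sum.inr ⟨k, π k⟩ := by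
  have hturn : IsTurn π (turnVertex π k).1 (turnVertex π k).2 := ⟨k, rfl, rfl⟩
  have hpat := localLabel_labelOf π (turnVertex π k)
  rw [if_pos hturn] at hpat
  simp only [gridSubst, dif_pos (And.intro hturn.isInterior hpat)]
  rfl

theorem gridSubst_labelOf_of_not_isTurn (π : Perm (Fin n)) {v : Vertex n}
    (h : ¬IsTurn π v.1 v.2) :
    gridSubst F n ⟨v, (gridMG (n + 2)).localLabel (labelOf π) v⟩ = Sum.inl 1 := by
  by_cases hv : IsInterior v
  · have hpat := localLabel_labelOf π v
    rw [if_neg h] at hpat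
    simp only [gridSubst, hpat]
    rw [dif_neg (fun h' => passPat_ne_turnPat hv.1 hv.2.1 _ _ h'.2),
      if_pos (Or.inl ⟨hv, _, _, rfl⟩)]
  · simp only [gridSubst, (admissible_labelOf π).boundary v hv]
    rw [dif_neg (fun h' => hv h'.1), if_pos (Or.inr ⟨hv, trivial⟩)]

theorem prod_gridSubst_labelOf (π : Perm (Fin n)) :
    ∏ v, Sum.elim (fun c => (C c : MvPolynomial (Σ _ : Fin n, Fin n) F)) (fun p => X p)
        (gridSubst F n ⟨v, (gridMG (n + 2)).localLabel (labelOf π) v⟩) =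
      ∏ k, X ⟨k, π k⟩ := by
  refine (Fintype.prod_of_injective (turnVertex π) (turnVertex_injective π) _ _
    (fun v hv => ?_) (fun k => ?_)).symm
  · have h : ¬IsTurn π v.1 v.2 := fun ⟨k, hk1, hk2⟩ =>
      hv ⟨k, Prod.ext (Fin.ext hk1) (Fin.ext hk2)⟩
    rw [gridSubst_labelOf_of_not_isTurn π h, Sum.elim_inl, map_one]
  · rw [gridSubst_labelOf_turnVertex, Sum.elim_inr]

namespace Admissible

variable {f : Edge n → Fin 2}

theorem turn_or_pass (hf : Admissible f) {i j : ℕ} (hi1 : 1 ≤ i) (hin : i ≤ n) (hj1 : 1 ≤ j)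
    (hjn : j ≤ n) :
    (hLabel f i (j - 1) = 0 ∧ hLabel f i j = 1 ∧ vLabel f (i - 1) j = 0 ∧ vLabel f i j = 1) ∨
      (hLabel f i (j - 1) = hLabel f i j ∧ vLabel f (i - 1) j = vLabel f i j) := by
  let v : Vertex n := (⟨i, by omega⟩, ⟨j, by omega⟩)
  have hright : (hEdge (n := n) i j (by omega) (by omega)).val.1 = v := rfl
  have hleft : (hEdge (n := n) i (j - 1) (by omega) (by omega)).val.2 = v :=
    Prod.ext rfl (Fin.ext (Nat.sub_add_cancel hj1))
  have hdown : (vEdge (n := n) i j (by omega) (by omega)).val.1 = v := rfl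
  have hup : (vEdge (n := n) (i - 1) j (by omega) (by omega)).val.2 = v :=
    Prod.ext (Fin.ext (Nat.sub_add_cancel hi1)) rfl
  rw [hLabel_eq f (j := j - 1) (by omega) (by omega), hLabel_eq f (by omega) (by omega),
    vLabel_eq f (i := i - 1) (by omega) (by omega), vLabel_eq f (by omega) (by omega)]
  have memR := mem_ends_of_tail_eq hright
  have memL := mem_ends_of_head_eq hleft
  have memD := mem_ends_of_tail_eq hdown
  have memU := mem_ends_of_head_eq hup
  rcases hf.interior v ⟨hi1, hin, hj1, hjn⟩ with hpat | ⟨a, b, hpat⟩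
  · have hval := fun {e} => Multigraph.apply_eq_of_localLabel_eq (e := e) hpat
    exact Or.inl ⟨(hval memL).trans (turnPat_apply_of_head _ hleft),
      (hval memR).trans (turnPat_apply_of_tail _ hright),
      (hval memU).trans (turnPat_apply_of_head _ hup),
      (hval memD).trans (turnPat_apply_of_tail _ hdown)⟩
  · have hval := fun {e} => Multigraph.apply_eq_of_localLabel_eq (e := e) hpat
    have hhoriz : ∀ {e} (he : v ∈ (gridMG (n + 2)).ends e), ¬IsVert e → f e = b :=
      fun he h => (hval he).trans (passPat_apply_of_not_isVert he a b h)
    have hvert : ∀ {e} (he : v ∈ (gridMG (n + 2)).ends e), IsVert e → f e = a :=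
      fun he h => (hval he).trans (passPat_apply_of_isVert he a b h)
    exact Or.inr ⟨(hhoriz memL (not_isVert_hEdge _ _ _ _)).trans
        (hhoriz memR (not_isVert_hEdge _ _ _ _)).symm,
      (hvert memU (isVert_vEdge _ _ _ _)).trans (hvert memD (isVert_vEdge _ _ _ _)).symm⟩

theorem apply_of_not_isInterior (hf : Admissible f) {v : Vertex n} {e : Edge n}
    (he : v ∈ (gridMG (n + 2)).ends e) (hv : ¬IsInterior v) :
    f e = if IsVert e then boundaryVert v else boundaryHoriz v :=
  Multigraph.apply_eq_of_localLabel_eq (hf.boundary v hv) he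

theorem hLabel_zero (hf : Admissible f) {i : ℕ} (hi : i < n + 2) : hLabel f i 0 = 0 := by
  rw [hLabel_eq f hi (Nat.succ_pos n), hf.apply_of_not_isInterior (mem_ends_of_tail_eq rfl)
    (by simp [IsInterior, hEdge]), if_neg (not_isVert_hEdge _ _ _ _)]
  simp [boundaryHoriz, hEdge]

theorem hLabel_last (hf : Admissible f) {i : ℕ} (hi1 : 1 ≤ i) (hin : i ≤ n) :
    hLabel f i n = 1 := by
  rw [hLabel_eq f (by omega) (Nat.lt_succ_self n), hf.apply_of_not_isInterior
    (mem_ends_of_head_eq rfl) (by simp [IsInterior, hEdge]), if_neg (not_isVert_hEdge _ _ _ _)]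
  simp [boundaryHoriz, hEdge, hi1, hin]

theorem vLabel_zero (hf : Admissible f) {j : ℕ} (hj : j < n + 2) : vLabel f 0 j = 0 := by
  rw [vLabel_eq f (Nat.succ_pos n) hj, hf.apply_of_not_isInterior (mem_ends_of_tail_eq rfl)
    (by simp [IsInterior, vEdge]), if_pos (isVert_vEdge _ _ _ _)]
  simp [boundaryVert, vEdge]

theorem vLabel_last (hf : Admissible f) {j : ℕ} (hj1 : 1 ≤ j) (hjn : j ≤ n) :
    vLabel f n j = 1 := by
  rw [vLabel_eq f (Nat.lt_succ_self n) (by omega), hf.apply_of_not_isInterior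
    (mem_ends_of_head_eq rfl) (by simp [IsInterior, vEdge]), if_pos (isVert_vEdge _ _ _ _)]
  simp [boundaryVert, vEdge, hj1, hjn]

theorem hLabel_eq_zero (hf : Admissible f) {i j : ℕ} (hi : ¬(1 ≤ i ∧ i ≤ n)) :
    hLabel f i j = 0 := by
  unfold hLabel
  split_ifs
  · rw [hf.apply_of_not_isInterior (mem_ends_of_tail_eq rfl) (fun hv => hi ⟨hv.1, hv.2.1⟩),
      if_neg (not_isVert_hEdge _ _ _ _), boundaryHoriz, if_neg (fun hb => hi hb.2)]
  · rfl

theorem vLabel_eq_zero (hf : Admissible f) {i j : ℕ} (hj : ¬(1 ≤ j ∧ j ≤ n)) :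
    vLabel f i j = 0 := by
  unfold vLabel
  split_ifs
  · rw [hf.apply_of_not_isInterior (mem_ends_of_tail_eq rfl) (fun hv => hj hv.2.2),
      if_pos (isVert_vEdge _ _ _ _), boundaryVert, if_neg (fun hb => hj hb.2)]
  · rfl

theorem exists_row_threshold (hf : Admissible f) (k : Fin n) :
    ∃ c : Fin n, ∀ j ≤ n, (hLabel f (k + 1) j = 1 ↔ (c : ℕ) + 1 ≤ j) := by
  have hk := k.isLt
  obtain ⟨c, hc1, hcn, hc⟩ := Nat.exists_threshold (p := fun j => hLabel f (k + 1) j = 1)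
    (by rw [hf.hLabel_zero (by omega)]; decide) (hf.hLabel_last (by omega) (by omega))
    fun j hj hp => by
      rcases hf.turn_or_pass (i := k + 1) (j := j + 1) (by omega) (by omega) (by omega) hj
        with h | h
      · exact h.2.1
      · exact h.1 ▸ hp
  exact ⟨⟨c - 1, by omega⟩, fun j hj => (hc j hj).trans (by simp only; omega)⟩

theorem exists_col_threshold (hf : Admissible f) (l : Fin n) :
    ∃ r : Fin n, ∀ i ≤ n, (vLabel f i (l + 1) = 1 ↔ (r : ℕ) + 1 ≤ i) := by
  have hl := l.isLt
  obtain ⟨r, hr1, hrn, hr⟩ := Nat.exists_threshold (p := fun i => vLabel f i (l + 1) = 1)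
    (by rw [hf.vLabel_zero (by omega)]; decide) (hf.vLabel_last (by omega) (by omega))
    fun i hi hp => by
      rcases hf.turn_or_pass (i := i + 1) (j := l + 1) (by omega) hi (by omega) (by omega)
        with h | h
      · exact h.2.2.2
      · exact h.2 ▸ hp
  exact ⟨⟨r - 1, by omega⟩, fun i hi => (hr i hi).trans (by simp only; omega)⟩

theorem hTurn_iff_vTurn (hf : Admissible f) {i j : ℕ} (hi1 : 1 ≤ i) (hin : i ≤ n) (hj1 : 1 ≤ j)
    (hjn : j ≤ n) :
    (hLabel f i (j - 1) = 0 ∧ hLabel f i j = 1) ↔ (vLabel f (i - 1) j = 0 ∧ vLabel f i j = 1) := by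
  rcases hf.turn_or_pass hi1 hin hj1 hjn with h | ⟨hh, hv⟩
  · exact iff_of_true ⟨h.1, h.2.1⟩ ⟨h.2.2.1, h.2.2.2⟩
  · rw [hh, hv]
    exact iff_of_false (fun h => absurd (h.1.symm.trans h.2) (by decide))
      (fun h => absurd (h.1.symm.trans h.2) (by decide))

theorem hLabel_eq_stepLabel (hf : Admissible f) {π : Perm (Fin n)}
    (hπ : ∀ k : Fin n, ∀ j ≤ n, (hLabel f (k + 1) j = 1 ↔ (π k : ℕ) + 1 ≤ j)) {i j : ℕ}
    (hj : j ≤ n) : hLabel f i j = stepLabel π i j := by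
  by_cases hi : 1 ≤ i ∧ i ≤ n
  · obtain ⟨k, rfl⟩ : ∃ k : Fin n, (k : ℕ) + 1 = i := ⟨⟨i - 1, by omega⟩, by simp only; omega⟩
    refine Fin.two_eq_of_iff ?_
    rw [stepLabel_succ, hπ k j hj]
    simp
  · rw [hf.hLabel_eq_zero hi, stepLabel, if_neg (fun ⟨k, hk, _⟩ => hi (by omega))]

theorem vLabel_eq_stepLabel (hf : Admissible f) {σ : Perm (Fin n)}
    (hσ : ∀ l : Fin n, ∀ i ≤ n, (vLabel f i (l + 1) = 1 ↔ (σ l : ℕ) + 1 ≤ i)) {i j : ℕ}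
    (hi : i ≤ n) : vLabel f i j = stepLabel σ j i := by
  by_cases hj : 1 ≤ j ∧ j ≤ n
  · obtain ⟨l, rfl⟩ : ∃ l : Fin n, (l : ℕ) + 1 = j := ⟨⟨j - 1, by omega⟩, by simp only; omega⟩
    refine Fin.two_eq_of_iff ?_
    rw [stepLabel_succ, hσ l i hi]
    simp
  · rw [hf.vLabel_eq_zero hj, stepLabel, if_neg (fun ⟨k, hk, _⟩ => hj (by omega))]

theorem exists_labelOf_eq (hf : Admissible f) : ∃ π : Perm (Fin n), labelOf π = f := by
  choose c hc using hf.exists_row_threshold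
  choose r hr using hf.exists_col_threshold
  -- row `k + 1` turns in column `c k + 1`, column `l + 1` turns in row `r l + 1`
  have hcr : ∀ k l, c k = l ↔ r l = k := by
    intro k l
    have h := hf.hTurn_iff_vTurn (i := k + 1) (j := l + 1) (by omega) (by omega) (by omega)
      (by omega)
    simp only [Nat.add_sub_cancel, Fin.two_eq_zero_iff, ne_eq, hc k l (by omega),
      hc k ((l : ℕ) + 1) (by omega), hr l k (by omega), hr l ((k : ℕ) + 1) (by omega)] at h
    rw [Fin.ext_iff, Fin.ext_iff]
    omega
  let π : Perm (Fin n) := ⟨c, r, fun k => (hcr k _).mp rfl, fun l => (hcr _ l).mpr rfl⟩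
  refine ⟨π, funext fun e => ?_⟩
  by_cases hv : IsVert e
  · rw [labelOf, if_pos hv, apply_eq_vLabel f hv,
      hf.vLabel_eq_stepLabel (σ := π.symm) hr (Nat.le_of_lt_succ (tail_fst_lt_of_isVert hv))]
  · rw [labelOf, if_neg hv, apply_eq_hLabel f hv,
      hf.hLabel_eq_stepLabel (π := π) hc (Nat.le_of_lt_succ (tail_snd_lt_of_not_isVert hv))]

end Admissible

theorem sum_prod_gridSubst :
    ∑ f : Edge n → Fin 2, ∏ v, Sum.elim (fun c => (C c : MvPolynomial (Σ _ : Fin n, Fin n) F))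
        (fun p => X p) (gridSubst F n ⟨v, (gridMG (n + 2)).localLabel f v⟩) =
      ∑ π : Perm (Fin n), ∏ k, X ⟨k, π k⟩ := by
  rw [← Finset.sum_subset (Finset.subset_univ (Finset.univ.filter Admissible)) ?_]
  · refine (Finset.sum_bij (fun π _ => labelOf π)
      (fun π _ => Finset.mem_filter.mpr ⟨Finset.mem_univ _, admissible_labelOf π⟩)
      (fun π _ σ _ h => labelOf_injective h) (fun f hf => ?_)
      (fun π _ => (prod_gridSubst_labelOf π).symm)).symm
    obtain ⟨π, rfl⟩ := (Finset.mem_filter.mp hf).2.exists_labelOf_eq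
    exact ⟨π, Finset.mem_univ _, rfl⟩
  · intro f _ hf
    have hf' : ¬Admissible f := fun h => hf (Finset.mem_filter.mpr ⟨Finset.mem_univ _, h⟩)
    obtain ⟨v, hv⟩ := not_forall.mp (mt (admissible_of_gridSubst_ne_zero (F := F)) hf')
    exact Finset.prod_eq_zero (Finset.mem_univ v) (by rw [not_not.mp hv, Sum.elim_inl, map_zero])

end PermGrid

theorem permTensor_simpleProj_grid_general (F : Type) [Field F] (n : ℕ) :
    SimpleProj (permTensor F n) (gTensor F (gridMG (n + 2)) 2) := by
  refine ⟨PermGrid.gridSubst F n, fun v y y' p p' hp hp' =>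
    Fin.ext ((PermGrid.gridSubst_eq_inr hp).trans (PermGrid.gridSubst_eq_inr hp').symm), ?_⟩
  rw [toPoly_permTensor, Multigraph.toPoly_gTensor, ← PermGrid.sum_prod_gridSubst]
  simp only [map_sum, map_prod, aeval_X]

/-- The `n × n` permanent tensor is a simple projection of the graph
tensor of the simple `(n+2) × (n+2)` grid graph with length parameter `2`:
`per_n ≤ₛ T_{G,2}`. -/
theorem permTensor_simpleProj_grid (F : Type) [Field F] (n : ℕ) (hn : 1 ≤ n) :
    SimpleProj (permTensor F n) (gTensor F (gridMG (n + 2)) 2) :=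
  permTensor_simpleProj_grid_general F n
end

section
/- Let lg denote the base-2 logarithm, with the convention that t·lg t = 0 when t = 0. For γ ∈ [0, 1/4], set β = 1/2 − 2γ and α = 1/2 + γ, and define H*(γ) = −4γ·lg γ − 2β·lg(β/3), U(γ) = −4γ·lg γ − (8β/5)·lg(2β/5) − (2β/5)·lg(β/5) + 2γ + (8/5)·β, and H(α,β,γ) = −α·lg α − β·lg β − γ·lg γ. Then for all γ ∈ [0, 1/4], it holds that 3·H*(γ) − 2·U(γ) ≥ H(α,β,γ). -/
/-!
After expanding `lg (β/3)`, `lg (2β/5)` and `lg (β/5)`, the difference of the two sides is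
`-3γ·lg γ - β·lg β + α·lg α - 4γ + β·(6·lg 3 - 4·lg 5)`. The last term is nonnegative since
`5⁴ ≤ 3⁶`, and monotonicity of `lg` gives `γ·lg γ ≤ -2γ` and `β·lg β ≤ -β`, while
`α·lg α ≥ -1/2` for `α ≥ 1/2`; these bounds add up to `2γ + β - 1/2 = 0`.
-/

/-- The binary logarithm.  (Note `Real.logb 2 0 = 0`, so any summand of the form
`t·lg t` automatically vanishes at `t = 0`, implementing the convention
`t·lg t = 0` for `t = 0`.) -/
noncomputable def lg (x : ℝ) : ℝ := Real.logb 2 x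

lemma lg_two : lg 2 = 1 :=
  Real.logb_self_eq_one (by norm_num)

lemma lg_inv_two_pow (n : ℕ) : lg (2 ^ n)⁻¹ = -n := by
  rw [lg, Real.logb_inv, Real.logb_pow, Real.logb_self_eq_one (by norm_num), mul_one]

lemma mul_lg_mul_left (x : ℝ) {c : ℝ} (hc : c ≠ 0) : x * lg (c * x) = x * lg c + x * lg x := by
  rcases eq_or_ne x 0 with rfl | hx
  · simp
  · rw [lg, Real.logb_mul hc hx, mul_add]
    rfl

lemma mul_lg_div (x : ℝ) {c : ℝ} (hc : c ≠ 0) : x * lg (x / c) = x * lg x - x * lg c := by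
  rcases eq_or_ne x 0 with rfl | hx
  · simp
  · rw [lg, Real.logb_div hx hc, mul_sub]
    rfl

lemma mul_lg_le_mul_lg {x c : ℝ} (hx : 0 ≤ x) (hxc : x ≤ c) : x * lg x ≤ x * lg c := by
  rcases hx.eq_or_lt with rfl | hx
  · simp
  · exact mul_le_mul_of_nonneg_left (Real.logb_le_logb_of_le (by norm_num) hx hxc) hx.le

lemma neg_half_le_mul_lg {x : ℝ} (hx : 1 / 2 ≤ x) : -(1 / 2) ≤ x * lg x := by
  have hlog2 : 0 < Real.log 2 := Real.log_pos (by norm_num)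
  have hlog2_lt_one : Real.log 2 < 1 := Real.log_two_lt_d9.trans (by norm_num)
  -- `2x·log(2x) ≥ 2x - 1` makes `x·log x ≥ x·(1 - log 2) - 1/2`, increasing since `log 2 < 1`
  have htangent := Real.self_sub_one_le_mul_log (show 0 ≤ 2 * x by linarith)
  rw [Real.log_mul two_ne_zero (by linarith)] at htangent
  rw [lg, Real.logb, mul_div_assoc', le_div_iff₀ hlog2]
  nlinarith [mul_nonneg (sub_nonneg.2 hx) (sub_nonneg.2 hlog2_lt_one.le)]

lemma four_mul_lg_five_le_six_mul_lg_three : 4 * lg 5 ≤ 6 * lg 3 := by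
  have h : lg ((5 : ℝ) ^ 4) ≤ lg ((3 : ℝ) ^ 6) :=
    Real.logb_le_logb_of_le (by norm_num) (by norm_num) (by norm_num)
  simpa only [lg, Real.logb_pow, Nat.cast_ofNat] using h

/-- For `γ ∈ [0, 1/4]`, with `β = 1/2 − 2γ` and `α = 1/2 + γ`, setting
`H*(γ) = −4γ·lg γ − 2β·lg(β/3)`,
`U(γ) = −4γ·lg γ − (8β/5)·lg(2β/5) − (2β/5)·lg(β/5) + 2γ + (8/5)β` and
`H(α,β,γ) = −α·lg α − β·lg β − γ·lg γ`, we have `3·H*(γ) − 2·U(γ) ≥ H(α,β,γ)`. -/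
theorem three_Hstar_sub_two_U_ge (γ α β : ℝ) (h0 : 0 ≤ γ) (h4 : γ ≤ 1 / 4)
    (hα : α = 1 / 2 + γ) (hβ : β = 1 / 2 - 2 * γ) :
    3 * (-4 * γ * lg γ - 2 * β * lg (β / 3))
      - 2 * (-4 * γ * lg γ - 8 * β / 5 * lg (2 * β / 5) - 2 * β / 5 * lg (β / 5)
          + 2 * γ + 8 / 5 * β)
      ≥ -α * lg α - β * lg β - γ * lg γ := by
  have hβ3 := mul_lg_div β three_ne_zero
  have hβ5 := mul_lg_div β (c := 5) (by norm_num)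
  have h2β5 := mul_lg_div (2 * β) (c := 5) (by norm_num)
  have h2β := mul_lg_mul_left β two_ne_zero
  have hγlg : γ * lg γ ≤ γ * lg (2 ^ 2)⁻¹ := mul_lg_le_mul_lg h0 (by norm_num [h4])
  have hβlg : β * lg β ≤ β * lg (2 ^ 1)⁻¹ := mul_lg_le_mul_lg (by linarith) (by norm_num; linarith)
  have hαlg : -(1 / 2) ≤ α * lg α := neg_half_le_mul_lg (by linarith)
  have h35 : 0 ≤ β * (6 * lg 3 - 4 * lg 5) :=
    mul_nonneg (by linarith) (by linarith [four_mul_lg_five_le_six_mul_lg_three])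
  rw [lg_inv_two_pow] at hγlg hβlg
  rw [lg_two] at h2β
  push_cast at hγlg hβlg
  linarith
end
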